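/- arXiv:2510.26983 — 2 statements merged into one kernel-verified Lean document; each statement's English description precedes it below -/
import Mathlib

section
/- Correctness of the direct two-loop recursion: Let m, n ≥ 1 and ℓ ≥ 1. Let s₀, …, s_{ℓ−1} ∈ ℝ^n, y₀, …, y_{ℓ−1} ∈ ℝ^m, p₀, …, p_{ℓ−1} ∈ ℝ, and M₀ ∈ ℝ^{m×n}, and define recursively M_{i+1} = Mᵢ(Iₙ − pᵢ sᵢ sᵢᵀ) + pᵢ yᵢ sᵢᵀ for i = 0, …, ℓ−1. Given q ∈ ℝ^n, set q_ℓ = q and, for i = ℓ−1 down to 0, define αᵢ = pᵢ (sᵢᵀ q_{i+1}) and qᵢ = q_{i+1} − αᵢ sᵢ; finally set r = M₀ q₀ + Σ_{i=0}^{ℓ−1} αᵢ yᵢ. Then r = M_ℓ q. -/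
open Matrix

lemma vecMulVec_mulVec' {m n : Type*} [Fintype n] (a : m → ℝ) (b : n → ℝ) (v : n → ℝ) :
    Matrix.vecMulVec a b *ᵥ v = (b ⬝ᵥ v) • a := by
  ext i
  simp [Matrix.vecMulVec, Matrix.mulVec, dotProduct, Finset.mul_sum, mul_comm,
    mul_left_comm, mul_assoc]

/-- Correctness of the direct two-loop recursion: the vector `r` computed from the
backward loop (producing scalars `αᵢ` and vectors `qᵢ`), the base matrix `M₀` and the
forward loop equals the matrix–vector product `M_ℓ q`. -/
theorem two_loop_recursion_direct (m n ℓ : ℕ) (hm : 1 ≤ m) (hn : 1 ≤ n) (hℓ : 1 ≤ ℓ)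
    (s : ℕ → Fin n → ℝ) (y : ℕ → Fin m → ℝ) (p : ℕ → ℝ)
    (M : ℕ → Matrix (Fin m) (Fin n) ℝ)
    (hM : ∀ i < ℓ, M (i + 1) =
      M i * (1 - p i • Matrix.vecMulVec (s i) (s i)) + p i • Matrix.vecMulVec (y i) (s i))
    (q : Fin n → ℝ) (qs : ℕ → Fin n → ℝ) (α : ℕ → ℝ)
    (hq : qs ℓ = q)
    (hα : ∀ i < ℓ, α i = p i * (s i ⬝ᵥ qs (i + 1)))
    (hqs : ∀ i < ℓ, qs i = qs (i + 1) - α i • s i)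
    (r : Fin m → ℝ)
    (hr : r = M 0 *ᵥ qs 0 + ∑ i ∈ Finset.range ℓ, α i • y i) :
    r = M ℓ *ᵥ q := by
  have key : ∀ k, k ≤ ℓ → M k *ᵥ qs k = M 0 *ᵥ qs 0 + ∑ i ∈ Finset.range k, α i • y i := by
    intro k hk
    induction k with
    | zero => simp
    | succ k ih =>
      have hkℓ : k < ℓ := hk
      rw [hM k hkℓ, add_mulVec,
        ← Matrix.mulVec_mulVec, sub_mulVec, one_mulVec, smul_mulVec, smul_mulVec,
        vecMulVec_mulVec', vecMulVec_mulVec']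
      rw [show qs (k+1) - p k • (s k ⬝ᵥ qs (k+1)) • s k = qs k by
        rw [hqs k hkℓ, hα k hkℓ, smul_smul]]
      rw [ih (le_of_lt hkℓ), Finset.sum_range_succ, smul_smul, ← hα k hkℓ, add_assoc]
  rw [hr, ← key ℓ le_rfl, hq]
end

section
/- Correctness of the transpose two-loop recursion: Let m, n ≥ 1 and ℓ ≥ 1. Let s₀, …, s_{ℓ−1} ∈ ℝ^n, y₀, …, y_{ℓ−1} ∈ ℝ^m, p₀, …, p_{ℓ−1} ∈ ℝ, and M₀ ∈ ℝ^{m×n}, and define recursively M_{i+1} = Mᵢ(Iₙ − pᵢ sᵢ sᵢᵀ) + pᵢ yᵢ sᵢᵀ for i = 0, …, ℓ−1. Given q ∈ ℝ^m, define αᵢ = pᵢ (yᵢᵀ q) for each i, set r₀ = M₀ᵀ q, and for i = 0, …, ℓ−1 define βᵢ = pᵢ (sᵢᵀ rᵢ) and r_{i+1} = rᵢ + (αᵢ − βᵢ) sᵢ. Then r_ℓ = M_ℓᵀ q. -/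
open Matrix


lemma aux_vecMulVec_mulVec {k l : Type*} [Fintype l] (a : k → ℝ) (b : l → ℝ) (x : l → ℝ) :
    Matrix.vecMulVec a b *ᵥ x = (b ⬝ᵥ x) • a := by
  ext i
  simp [Matrix.mulVec, Matrix.vecMulVec_apply, dotProduct, Finset.mul_sum, Finset.sum_mul,
    mul_assoc, mul_comm, mul_left_comm]

lemma aux_vecMulVec_transpose {k l : Type*} (a : k → ℝ) (b : l → ℝ) :
    (Matrix.vecMulVec a b)ᵀ = Matrix.vecMulVec b a := by
  ext i j
  simp [Matrix.vecMulVec_apply, mul_comm]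

/-- Correctness of the transpose two-loop recursion: the vector `r_ℓ` computed from the
scalars `αᵢ = pᵢ yᵢᵀ q`, the base matrix `M₀ᵀ` and the forward correction loop equals the
matrix–vector product `M_ℓᵀ q`. -/
theorem two_loop_recursion_transpose (m n ℓ : ℕ) (hm : 1 ≤ m) (hn : 1 ≤ n) (hℓ : 1 ≤ ℓ)
    (s : ℕ → Fin n → ℝ) (y : ℕ → Fin m → ℝ) (p : ℕ → ℝ)
    (M : ℕ → Matrix (Fin m) (Fin n) ℝ)
    (hM : ∀ i < ℓ, M (i + 1) =
      M i * (1 - p i • Matrix.vecMulVec (s i) (s i)) + p i • Matrix.vecMulVec (y i) (s i))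
    (q : Fin m → ℝ) (α β : ℕ → ℝ) (r : ℕ → Fin n → ℝ)
    (hα : ∀ i < ℓ, α i = p i * (y i ⬝ᵥ q))
    (hr0 : r 0 = (M 0)ᵀ *ᵥ q)
    (hβ : ∀ i < ℓ, β i = p i * (s i ⬝ᵥ r i))
    (hr : ∀ i < ℓ, r (i + 1) = r i + (α i - β i) • s i) :
    r ℓ = (M ℓ)ᵀ *ᵥ q := by
  suffices key : ∀ i, i ≤ ℓ → r i = (M i)ᵀ *ᵥ q from key ℓ le_rfl
  intro i hi
  induction i with
  | zero => exact hr0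
  | succ k ih =>
    have hk : k < ℓ := hi
    have ihk : r k = (M k)ᵀ *ᵥ q := ih hk.le
    rw [hr k hk, hα k hk, hβ k hk, ihk, hM k hk]
    rw [Matrix.transpose_add, Matrix.transpose_mul, Matrix.transpose_smul,
      Matrix.transpose_sub, Matrix.transpose_one, Matrix.transpose_smul,
      aux_vecMulVec_transpose, aux_vecMulVec_transpose,
      Matrix.add_mulVec, ← Matrix.mulVec_mulVec, Matrix.sub_mulVec, Matrix.one_mulVec,
      Matrix.smul_mulVec, Matrix.smul_mulVec,
      aux_vecMulVec_mulVec, aux_vecMulVec_mulVec]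
    ext j
    simp [smul_smul]
    ring
end
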